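/- arXiv:2504.05841 — 5 statements merged into one kernel-verified Lean document; each statement's English description precedes it below -/
import Mathlib

section
/- Let 𝒜 be a finite-dimensional unital associative normed ℂ-algebra. Then every invertible element a ∈ 𝒜 is an exponential: there exists b ∈ 𝒜 with a = exp(b), where exp(b) = ∑_{n≥0} bⁿ/n! is the exponential defined by the convergent power series. -/
set_option maxHeartbeats 1000000 in
/-- Auxiliary: in a finite-dimensional *commutative* unital normed ℂ-algebra every unit
is an exponential. -/
theorem aux_isUnit_exists_exp_comm
    {B : Type*} [NormedCommRing B] [NormedAlgebra ℂ B] [FiniteDimensional ℂ B]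
    (a : B) (ha : IsUnit a) :
    ∃ b : B, a = NormedSpace.exp b := by
  let +nondep : NormedAlgebra ℚ B := .restrictScalars ℚ ℂ B
  rcases subsingleton_or_nontrivial B with hB | hB
  · exact ⟨0, Subsingleton.elim _ _⟩
  open NormedSpace Polynomial in
  -- the range of exp on B is open
  have hopenS : IsOpen (Set.range (exp : B → B)) := by
    rw [isOpen_iff_mem_nhds]
    rintro x ⟨b, rfl⟩
    have hu : IsUnit (exp b) := isUnit_exp b
    let e₀ : B ≃ₗ[ℂ] B :=
      { toFun := fun z => exp b * z
        map_add' := fun z w => mul_add _ z w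
        map_smul' := fun c z => mul_smul_comm c _ z
        invFun := fun z => ↑hu.unit⁻¹ * z
        left_inv := fun z => by
          show ↑hu.unit⁻¹ * (exp b * z) = z
          rw [← mul_assoc, IsUnit.val_inv_mul, one_mul]
        right_inv := fun z => by
          show exp b * (↑hu.unit⁻¹ * z) = z
          rw [← mul_assoc, IsUnit.mul_val_inv, one_mul] }
    let e : B ≃L[ℂ] B := e₀.toContinuousLinearEquiv
    have hderiv : HasStrictFDerivAt (exp : B → B) (e : B →L[ℂ] B) b := by
      have heq : (e : B →L[ℂ] B) = exp b • (1 : B →L[ℂ] B) := by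
        ext z
        simp [e, e₀, smul_eq_mul]
      rw [heq]
      exact hasStrictFDerivAt_exp
    rw [← hderiv.map_nhds_eq_of_equiv]
    simpa [Set.image_univ] using Filter.image_mem_map (Filter.univ_mem (f := nhds b))
  set S : Set B := Set.range (exp : B → B) with hSdef
  have h1S : (1 : B) ∈ S := ⟨0, exp_zero⟩
  set V : Set B := {x : B | IsUnit x} with hVdef
  have hopenV : IsOpen V := Units.isOpen
  -- left translate of S by a unit is open
  have htrans : ∀ u : Bˣ, IsOpen ((fun z => (u : B) * z) '' S) := by
    intro u
    have himg : (fun z => (u : B) * z) '' S = (fun z => ((u⁻¹ : Bˣ) : B) * z) ⁻¹' S := by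
      ext z
      constructor
      · rintro ⟨w, hw, rfl⟩
        simpa [← mul_assoc] using hw
      · intro hz
        refine ⟨((u⁻¹ : Bˣ) : B) * z, hz, ?_⟩
        show (u : B) * (((u⁻¹ : Bˣ) : B) * z) = z
        rw [← mul_assoc]
        simp
    rw [himg]
    exact hopenS.preimage (continuous_const.mul continuous_id)
  have hopenVS : IsOpen (V \ S) := by
    rw [isOpen_iff_mem_nhds]
    rintro x ⟨hxV, hxS⟩
    have hxu : IsUnit x := hxV
    refine Filter.mem_of_superset ((htrans hxu.unit).mem_nhds ?_) ?_
    · exact ⟨1, h1S, by simp⟩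
    · rintro _ ⟨w, ⟨c, rfl⟩, rfl⟩
      refine ⟨(hxu.unit.isUnit.mul (isUnit_exp c) : IsUnit _), ?_⟩
      rintro ⟨d, hd⟩
      refine hxS ⟨d + -c, ?_⟩
      rw [exp_add_of_commute (Commute.all d (-c)), hd, mul_assoc,
        ← exp_add_of_commute (Commute.all c (-c))]
      simp
  -- finiteness of the spectrum of 1 - a
  have hint : IsIntegral ℂ ((1 : B) - a) := IsIntegral.of_finite ℂ _
  have hp0 : minpoly ℂ ((1 : B) - a) ≠ 0 := minpoly.ne_zero hint
  have hσ : spectrum ℂ ((1 : B) - a) ⊆ {z : ℂ | (minpoly ℂ ((1 : B) - a)).IsRoot z} := by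
    intro z hz
    have hmem := spectrum.subset_polynomial_aeval ((1 : B) - a)
      (minpoly ℂ ((1 : B) - a)) ⟨z, hz, rfl⟩
    rw [minpoly.aeval, spectrum.zero_eq] at hmem
    exact hmem
  have hfin : (spectrum ℂ ((1 : B) - a)).Finite :=
    (Polynomial.finite_setOf_isRoot hp0).subset hσ
  -- the path z ↦ 1 + z • (a - 1) avoids non-units except at finitely many z
  set g : ℂ → B := fun z => 1 + z • (a - 1) with hgdef
  have hgcont : Continuous g := continuous_const.add (continuous_id.smul continuous_const)
  set Z : Set ℂ := {z : ℂ | ¬ IsUnit (g z)} with hZdef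
  have hZsub : Z ⊆ (fun w : ℂ => w⁻¹) '' (spectrum ℂ ((1 : B) - a)) := by
    intro z hz
    have hz0 : z ≠ 0 := by
      rintro rfl
      exact hz (by simp [g])
    refine ⟨z⁻¹, ?_, by simp [hz0]⟩
    by_contra hns
    rw [spectrum.notMem_iff] at hns
    have heq : g z = z • (algebraMap ℂ B z⁻¹ - ((1 : B) - a)) := by
      rw [smul_sub, Algebra.algebraMap_eq_smul_one, smul_smul, mul_inv_cancel₀ hz0]
      simp only [g, smul_sub, one_smul]
      abel
    refine hz ?_
    rw [heq, Algebra.smul_def]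
    exact ((isUnit_iff_ne_zero.mpr hz0).map (algebraMap ℂ B)).mul hns
  have hZc : Z.Countable := ((hfin.image _).subset hZsub).countable
  have hrank : 1 < Module.rank ℝ ℂ := by
    rw [Complex.rank_real_complex]
    norm_num
  have hpc : IsPathConnected Zᶜ := hZc.isPathConnected_compl_of_one_lt_rank hrank
  have h0Z : (0 : ℂ) ∈ Zᶜ := by
    simp only [Set.mem_compl_iff, hZdef, Set.mem_setOf_eq, not_not]
    simp [g]
  have h1Z : (1 : ℂ) ∈ Zᶜ := by
    simp only [Set.mem_compl_iff, hZdef, Set.mem_setOf_eq, not_not]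
    simpa [g] using ha
  have hK : IsPreconnected (g '' Zᶜ) := (hpc.image hgcont).isConnected.isPreconnected
  have hKsub : g '' Zᶜ ⊆ S ∪ (V \ S) := by
    rintro _ ⟨z, hzc, rfl⟩
    have hgu : IsUnit (g z) := not_not.mp hzc
    by_cases hgS : g z ∈ S
    · exact Or.inl hgS
    · exact Or.inr ⟨hgu, hgS⟩
  have h1K : (1 : B) ∈ g '' Zᶜ := ⟨0, h0Z, by simp [g]⟩
  have haK : a ∈ g '' Zᶜ := ⟨1, h1Z, by simp [g]⟩
  have hKS : g '' Zᶜ ⊆ S :=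
    hK.subset_left_of_subset_union hopenS hopenVS Set.disjoint_sdiff_right hKsub ⟨1, h1K, h1S⟩
  obtain ⟨b, hb⟩ := hKS haK
  exact ⟨b, hb.symm⟩

set_option maxHeartbeats 1000000 in
set_option synthInstance.maxHeartbeats 1000000 in
/-- In a finite-dimensional unital normed ℂ-algebra every invertible element is an
exponential. -/
theorem isUnit_iff_exists_exp
    {A : Type*} [NormedRing A] [NormedAlgebra ℂ A] [FiniteDimensional ℂ A]
    (a : A) (ha : IsUnit a) :
    ∃ b : A, a = NormedSpace.exp b := by
  let B : Subalgebra ℂ A := Algebra.adjoin ℂ ({a} : Set A)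
  have hcomm : ∀ x y : B, x * y = y * x := by
    rintro ⟨x, hx⟩ ⟨y, hy⟩
    refine Subtype.ext ?_
    refine Algebra.commute_of_mem_adjoin_of_forall_mem_commute hy ?_
    intro c hc
    rw [Set.mem_singleton_iff] at hc
    subst hc
    exact (Algebra.commute_of_mem_adjoin_self hx).symm
  letI : NormedCommRing B := { (inferInstance : NormedRing B) with mul_comm := hcomm }
  haveI : FiniteDimensional ℂ B :=
    FiniteDimensional.of_injective (B.val).toLinearMap Subtype.coe_injective
  let a' : B := ⟨a, Algebra.self_mem_adjoin_singleton ℂ a⟩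
  have hinj : Function.Injective (LinearMap.mulLeft ℂ a') := by
    intro x y hxy
    have hx : a * (x : A) = a * (y : A) := congrArg Subtype.val hxy
    exact Subtype.ext (ha.mul_left_cancel hx)
  obtain ⟨y, hy⟩ := (LinearMap.injective_iff_surjective).mp hinj 1
  have hy' : a' * y = 1 := hy
  have ha' : IsUnit a' := ⟨⟨a', y, hy', by rw [mul_comm]; exact hy'⟩, rfl⟩
  obtain ⟨b', hb'⟩ := aux_isUnit_exists_exp_comm a' ha'
  refine ⟨(b' : A), ?_⟩
  let +nondep : NormedAlgebra ℚ A := .restrictScalars ℚ ℂ A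
  let +nondep : NormedAlgebra ℚ B := .restrictScalars ℚ ℂ B
  have hmap := NormedSpace.map_exp (B.val) continuous_subtype_val b'
  have hcoe : ((NormedSpace.exp b' : B) : A) = NormedSpace.exp (b' : A) := hmap
  rw [← hcoe, ← hb']
end

section
/- Let 𝒜 ⊆ M_n(ℂ) be a unital ℂ-subalgebra containing all diagonal matrices (a structural matrix algebra), and let φ : 𝒜 → M_m(ℂ) be a continuous spectrum-shrinking map. Then there exist non-negative integers ℓ_1,…,ℓ_n with ℓ_1 + ⋯ + ℓ_n = m such that for every unit S of 𝒜 (invertible matrix S ∈ 𝒜 with S⁻¹ ∈ 𝒜) and all λ_1,…,λ_n ∈ ℂ, the characteristic polynomial of φ(S·diag(λ_1,…,λ_n)·S⁻¹) equals (X−λ_1)^{ℓ_1} ⋯ (X−λ_n)^{ℓ_n}. Moreover, ℓ_r = ℓ_s whenever the permutation matrix of the transposition exchanging indices r and s belongs to 𝒜. -/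
open Polynomial Matrix

lemma my_charpoly_eval {m : ℕ} (M : Matrix (Fin m) (Fin m) ℂ) (x : ℂ) :
    M.charpoly.eval x = (Matrix.scalar (Fin m) x - M).det := by
  rw [Matrix.charpoly, ← Polynomial.coe_evalRingHom, RingHom.map_det]
  congr 1
  ext i j
  by_cases h : i = j
  · subst h
    simp [Matrix.charmatrix_apply_eq, Matrix.scalar_apply, Matrix.diagonal_apply]
  · simp [Matrix.charmatrix_apply_ne _ _ _ h, Matrix.scalar_apply, Matrix.diagonal_apply_ne _ h]

lemma my_algebraMap_eq_scalar {m : ℕ} (x : ℂ) :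
    algebraMap ℂ (Matrix (Fin m) (Fin m) ℂ) x = Matrix.scalar (Fin m) x := by
  ext i j
  simp [Matrix.algebraMap_matrix_apply, Matrix.scalar_apply, Matrix.diagonal_apply]

lemma my_mem_spectrum_iff_root {m : ℕ} (M : Matrix (Fin m) (Fin m) ℂ) (x : ℂ) :
    x ∈ spectrum ℂ M ↔ M.charpoly.IsRoot x := by
  rw [spectrum.mem_iff, Matrix.isUnit_iff_isUnit_det, isUnit_iff_ne_zero, not_not,
    Polynomial.IsRoot, my_charpoly_eval, my_algebraMap_eq_scalar]


lemma my_multiset_grouping {n : ℕ} (lam : Fin n → ℂ) (s : Multiset ℂ)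
    (h : ∀ x ∈ s, x ∈ Set.range lam) :
    ∃ k : Fin n → ℕ, (∑ i, k i) = Multiset.card s ∧
      (s.map (fun r => X - C r)).prod = ∏ i, (X - C (lam i)) ^ (k i) := by
  induction s using Multiset.induction with
  | empty => exact ⟨0, by simp, by simp⟩
  | cons a s ih =>
    obtain ⟨k, hk1, hk2⟩ := ih (fun x hx => h x (Multiset.mem_cons_of_mem hx))
    obtain ⟨i0, hi0⟩ := h a (Multiset.mem_cons_self a s)
    refine ⟨Function.update k i0 (k i0 + 1), ?_, ?_⟩
    · rw [Finset.sum_update_of_mem (Finset.mem_univ _), Multiset.card_cons, ← hk1,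
        Finset.sum_eq_sum_sdiff_singleton_add (Finset.mem_univ i0) k]
      ring
    · have hprod : ∏ i ∈ Finset.univ \ {i0},
          (X - C (lam i)) ^ (Function.update k i0 (k i0 + 1) i)
          = ∏ i ∈ Finset.univ \ {i0}, (X - C (lam i)) ^ (k i) := by
        refine Finset.prod_congr rfl (fun i hi => ?_)
        have : i ≠ i0 := by
          intro hc
          exact (Finset.mem_sdiff.mp hi).2 (by simp [hc])
        rw [Function.update_of_ne this]
      rw [Multiset.map_cons, Multiset.prod_cons, hk2,
        Finset.prod_eq_prod_diff_singleton_mul (Finset.mem_univ i0)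
          (fun i => (X - C (lam i)) ^ (k i)),
        Finset.prod_eq_prod_diff_singleton_mul (Finset.mem_univ i0)
          (fun i => (X - C (lam i)) ^ (Function.update k i0 (k i0 + 1) i)),
        hprod, Function.update_self, ← hi0]
      ring

lemma my_roots_count {n : ℕ} (lam : Fin n → ℂ) (hlam : Function.Injective lam)
    (k : Fin n → ℕ) (j : Fin n) :
    (∏ i, (X - C (lam i)) ^ (k i)).roots.count (lam j) = k j := by
  classical
  have hne : ∀ i : Fin n, (X - C (lam i)) ^ (k i) ≠ 0 :=
    fun i => pow_ne_zero _ (X_sub_C_ne_zero (lam i))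
  rw [Polynomial.roots_prod _ _ (Finset.prod_ne_zero_iff.mpr (fun i _ => hne i)),
    Multiset.count_bind, ← Finset.sum_eq_multiset_sum]
  have : ∀ i : Fin n, Multiset.count (lam j) (((X - C (lam i)) ^ (k i)).roots)
      = if i = j then k j else 0 := by
    intro i
    rw [Polynomial.roots_pow, Polynomial.roots_X_sub_C, Multiset.count_nsmul,
      Multiset.count_singleton]
    by_cases h : i = j
    · subst h; simp
    · rw [if_neg (fun hc : lam j = lam i => h (hlam hc.symm)), if_neg h, mul_zero]
  rw [Finset.sum_congr rfl (fun i _ => this i)]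
  simp

lemma my_exp_unique {n : ℕ} {lam : Fin n → ℂ} (hlam : Function.Injective lam)
    {k k' : Fin n → ℕ}
    (h : ∏ i, (X - C (lam i)) ^ (k i) = ∏ i, (X - C (lam i)) ^ (k' i)) : k = k' := by
  funext j
  have := congrArg (fun p => Multiset.count (lam j) p.roots) h
  simpa [my_roots_count lam hlam] using this

lemma my_natDegree_prod {n : ℕ} (lam : Fin n → ℂ) (k : Fin n → ℕ) :
    (∏ i, (X - C (lam i)) ^ (k i)).natDegree = ∑ i, k i := by
  rw [Polynomial.natDegree_prod _ _
    (fun i _ => pow_ne_zero _ (X_sub_C_ne_zero (lam i)))]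
  simp [Polynomial.natDegree_pow]

lemma my_compl_preconn {Z : Set ℂ} (hZ : Z.Finite) : IsPreconnected Zᶜ :=
  (hZ.countable.isPathConnected_compl_of_one_lt_rank
    (by rw [Complex.rank_real_complex]; exact Cardinal.one_lt_two)).isConnected.isPreconnected


lemma my_exists_exponents {n m : ℕ} (N : Matrix (Fin m) (Fin m) ℂ) (lam : Fin n → ℂ)
    (hspec : spectrum ℂ N ⊆ Set.range lam) :
    ∃ k : Fin n → ℕ, (∑ i, k i) = m ∧ N.charpoly = ∏ i, (X - C (lam i)) ^ (k i) := by
  have hm : N.charpoly.Monic := Matrix.charpoly_monic N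
  have hsp : N.charpoly.Splits := IsAlgClosed.splits _
  have heq := hsp.eq_prod_roots_of_monic hm
  have hroots : ∀ x ∈ N.charpoly.roots, x ∈ Set.range lam := fun x hx =>
    hspec ((my_mem_spectrum_iff_root N x).2 (Polynomial.isRoot_of_mem_roots hx))
  obtain ⟨k, hk1, hk2⟩ := my_multiset_grouping lam _ hroots
  refine ⟨k, ?_, by rw [heq, hk2]⟩
  rw [hk1, Polynomial.splits_iff_card_roots.1 hsp, Matrix.charpoly_natDegree_eq_dim,
    Fintype.card_fin]


lemma my_path_constancy {n m : ℕ} (A : Subalgebra ℂ (Matrix (Fin n) (Fin n) ℂ))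
    (φ : A → Matrix (Fin m) (Fin m) ℂ) (hφc : Continuous φ)
    (hφ : ∀ a : A, spectrum ℂ (φ a) ⊆ spectrum ℂ (a : Matrix (Fin n) (Fin n) ℂ))
    (Z : Set ℂ) (hZ : Z.Finite) (c : ℂ → A)
    (hc : ContinuousOn (fun z => ((c z : Matrix (Fin n) (Fin n) ℂ))) Zᶜ)
    (lamf : ℂ → Fin n → ℂ) (hlamc : Continuous lamf)
    (hinj : ∀ z ∈ (Zᶜ : Set ℂ), Function.Injective (lamf z))
    (hspec : ∀ z ∈ (Zᶜ : Set ℂ),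
      spectrum ℂ ((c z : Matrix (Fin n) (Fin n) ℂ)) ⊆ Set.range (lamf z))
    {z₀ z₁ : ℂ} (hz₀ : z₀ ∈ (Zᶜ : Set ℂ)) (hz₁ : z₁ ∈ (Zᶜ : Set ℂ)) (k : Fin n → ℕ)
    (hk : (φ (c z₀)).charpoly = ∏ i, (X - C (lamf z₀ i)) ^ (k i)) :
    (φ (c z₁)).charpoly = ∏ i, (X - C (lamf z₁ i)) ^ (k i) := by
  classical
  haveI : PreconnectedSpace ↥(Zᶜ : Set ℂ) := Subtype.preconnectedSpace (my_compl_preconn hZ)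
  have hcres : Continuous (fun z : ↥(Zᶜ : Set ℂ) => φ (c ↑z)) := by
    have h1 : Continuous (fun z : ↥(Zᶜ : Set ℂ) => ((c ↑z : Matrix (Fin n) (Fin n) ℂ))) :=
      hc.restrict
    exact hφc.comp (Continuous.subtype_mk h1 (fun z => (c ↑z).2))
  let P : (Fin n → ℕ) → Set ↥(Zᶜ : Set ℂ) := fun k' =>
    {z | (φ (c ↑z)).charpoly = ∏ i, (X - C (lamf ↑z i)) ^ (k' i)}
  have hPclosed : ∀ k', IsClosed (P k') := by
    intro k'
    have hPeq : P k' = ⋂ (x : ℂ),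
        {z : ↥(Zᶜ : Set ℂ) | (Matrix.scalar (Fin m) x - φ (c ↑z)).det
          = ∏ i, (x - lamf ↑z i) ^ (k' i)} := by
      ext z
      simp only [Set.mem_iInter, Set.mem_setOf_eq, P]
      constructor
      · intro hz x
        have := congrArg (Polynomial.eval x) hz
        simpa [my_charpoly_eval, Polynomial.eval_prod] using this
      · intro hz
        refine Polynomial.funext (fun x => ?_)
        simpa [my_charpoly_eval, Polynomial.eval_prod] using hz x
    rw [hPeq]
    refine isClosed_iInter (fun x => isClosed_eq ?_ ?_)
    · exact (continuous_const.sub hcres).matrix_det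
    · refine continuous_finset_prod _ (fun i _ => ?_)
      exact (continuous_const.sub
        ((continuous_apply i).comp (hlamc.comp continuous_subtype_val))).pow _
  have hsum : ∀ z : ↥(Zᶜ : Set ℂ), ∃ k' : Fin n → ℕ, (∑ i, k' i) = m ∧ z ∈ P k' := by
    intro z
    obtain ⟨k', h1, h2⟩ := my_exists_exponents (φ (c ↑z)) (lamf ↑z)
      ((hφ (c ↑z)).trans (hspec ↑z z.2))
    exact ⟨k', h1, h2⟩
  have hdisj : ∀ (k1 k2 : Fin n → ℕ) (z : ↥(Zᶜ : Set ℂ)), z ∈ P k1 → z ∈ P k2 → k1 = k2 := by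
    intro k1 k2 z h1 h2
    exact my_exp_unique (hinj ↑z z.2) (h1.symm.trans h2)
  let K : Finset (Fin n → ℕ) :=
    Finset.image (fun f : Fin n → Fin (m+1) => fun i => (f i : ℕ)) Finset.univ
  have hK : ∀ k' : Fin n → ℕ, (∑ i, k' i) = m → k' ∈ K := by
    intro k' hk'
    refine Finset.mem_image.2 ⟨fun i => ⟨k' i, Nat.lt_succ_of_le ?_⟩, Finset.mem_univ _, rfl⟩
    exact hk' ▸ Finset.single_le_sum (fun i _ => Nat.zero_le _) (Finset.mem_univ i)
  have hopen : IsOpen (P k) := by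
    rw [← isClosed_compl_iff]
    have hcompl : (P k)ᶜ = ⋃ k' ∈ K.erase k, P k' := by
      ext z
      simp only [Set.mem_compl_iff, Set.mem_iUnion, exists_prop]
      constructor
      · intro hz
        obtain ⟨k', h1, h2⟩ := hsum z
        exact ⟨k', Finset.mem_erase.2 ⟨fun hc => hz (hc ▸ h2), hK k' h1⟩, h2⟩
      · rintro ⟨k', hk', h2⟩ hzk
        exact (Finset.mem_erase.1 hk').1 (hdisj k' k z h2 hzk)
    rw [hcompl]
    exact Set.Finite.isClosed_biUnion (K.erase k).finite_toSet (fun k' _ => hPclosed k')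
  have huniv : P k = Set.univ := by
    rcases (isClopen_iff.mp ⟨hPclosed k, hopen⟩) with h0 | h1
    · exfalso
      have : (⟨z₀, hz₀⟩ : ↥(Zᶜ : Set ℂ)) ∈ P k := hk
      rw [h0] at this
      exact Set.notMem_empty _ this
    · exact h1
  have : (⟨z₁, hz₁⟩ : ↥(Zᶜ : Set ℂ)) ∈ P k := huniv ▸ Set.mem_univ _
  exact this


lemma my_inv_mem {n : ℕ} (A : Subalgebra ℂ (Matrix (Fin n) (Fin n) ℂ))
    {M : Matrix (Fin n) (Fin n) ℂ} (hM : M ∈ A) : M⁻¹ ∈ A := by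
  by_cases h : IsUnit M.det
  · have hCH : aeval M M.charpoly = 0 := Matrix.aeval_self_charpoly M
    have hsplit : X * M.charpoly.divX + C (M.charpoly.coeff 0) = M.charpoly :=
      Polynomial.X_mul_divX_add M.charpoly
    have h0 : M.charpoly.coeff 0 ≠ 0 := by
      intro hc
      have hd : M.det ≠ 0 := isUnit_iff_ne_zero.mp h
      rw [Matrix.det_eq_sign_charpoly_coeff, hc, mul_zero] at hd
      exact hd rfl
    have key : M * aeval M M.charpoly.divX + (M.charpoly.coeff 0) • 1 = 0 := by
      rw [← hCH]
      conv_rhs => rw [← hsplit]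
      rw [map_add, _root_.map_mul, aeval_X, aeval_C, Algebra.algebraMap_eq_smul_one]
    have hmul : M * ((-(M.charpoly.coeff 0))⁻¹ • aeval M M.charpoly.divX) = 1 := by
      rw [mul_smul_comm]
      have h1 : M * aeval M M.charpoly.divX = -((M.charpoly.coeff 0) • 1) := by
        rw [eq_neg_iff_add_eq_zero]; exact key
      have h2 : (-M.charpoly.coeff 0)⁻¹ * M.charpoly.coeff 0 = -1 := by
        field_simp
      rw [h1, ← smul_neg, smul_smul, h2, neg_smul, one_smul, neg_neg]
    rw [Matrix.inv_eq_right_inv hmul]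
    refine A.smul_mem ?_ _
    have heq := Polynomial.aeval_algHom_apply A.val (⟨M, hM⟩ : A) M.charpoly.divX
    rw [show A.val (⟨M, hM⟩ : A) = M from rfl] at heq
    rw [heq]
    exact (aeval (⟨M, hM⟩ : A) M.charpoly.divX).2
  · rw [Matrix.nonsing_inv_apply_not_isUnit M h]
    exact A.zero_mem


lemma my_stage1 {n m : ℕ} (A : Subalgebra ℂ (Matrix (Fin n) (Fin n) ℂ))
    (hA : ∀ d : Fin n → ℂ, Matrix.diagonal d ∈ A)
    (φ : A → Matrix (Fin m) (Fin m) ℂ) (hφc : Continuous φ)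
    (hφ : ∀ a : A, spectrum ℂ (φ a) ⊆ spectrum ℂ (a : Matrix (Fin n) (Fin n) ℂ))
    (μ lam : Fin n → ℂ) (hμ : Function.Injective μ) (hlam : Function.Injective lam)
    (k : Fin n → ℕ)
    (hk : (φ ⟨Matrix.diagonal μ, hA μ⟩).charpoly = ∏ i, (X - C (μ i)) ^ (k i)) :
    (φ ⟨Matrix.diagonal lam, hA lam⟩).charpoly = ∏ i, (X - C (lam i)) ^ (k i) := by
  classical
  set lamf : ℂ → Fin n → ℂ := fun z i => (1 - z) * μ i + z * lam i with hlamf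
  set Z : Set ℂ := ⋃ p : {p : Fin n × Fin n // p.1 ≠ p.2},
    {z : ℂ | lamf z p.1.1 = lamf z p.1.2} with hZdef
  have hZfin : Z.Finite := by
    refine Set.finite_iUnion (fun p => ?_)
    have hsub : {z : ℂ | lamf z p.1.1 = lamf z p.1.2} ⊆
        {z | IsRoot (Polynomial.C (μ p.1.1 - μ p.1.2) +
          Polynomial.C ((lam p.1.1 - lam p.1.2) - (μ p.1.1 - μ p.1.2)) * X) z} := by
      intro z hz
      simp only [Set.mem_setOf_eq, hlamf] at hz
      simp only [Set.mem_setOf_eq, IsRoot, eval_add, eval_mul, eval_C, eval_X]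
      linear_combination hz
    refine Set.Finite.subset (Polynomial.finite_setOf_isRoot ?_) hsub
    intro hc
    have h0 := congrArg (Polynomial.eval 0) hc
    simp only [eval_add, eval_mul, eval_C, eval_X, mul_zero, add_zero, eval_zero] at h0
    exact p.2 (hμ (sub_eq_zero.mp h0))
  have hmem : ∀ z : ℂ, Function.Injective (lamf z) → z ∈ (Zᶜ : Set ℂ) := by
    intro z hz
    simp only [Set.mem_compl_iff, hZdef, Set.mem_iUnion, not_exists]
    rintro ⟨⟨i, j⟩, hne⟩ hij
    exact hne (hz hij)
  have hlamf0 : lamf 0 = μ := by funext i; simp [hlamf]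
  have hlamf1 : lamf 1 = lam := by funext i; simp [hlamf]
  have h0mem : (0 : ℂ) ∈ (Zᶜ : Set ℂ) := hmem 0 (hlamf0 ▸ hμ)
  have h1mem : (1 : ℂ) ∈ (Zᶜ : Set ℂ) := hmem 1 (hlamf1 ▸ hlam)
  have hinj : ∀ z ∈ (Zᶜ : Set ℂ), Function.Injective (lamf z) := by
    intro z hz i j hij
    by_contra hne
    apply hz
    rw [hZdef]
    exact Set.mem_iUnion.2 ⟨⟨(i, j), hne⟩, hij⟩
  have hlamc : Continuous lamf := by
    refine continuous_pi (fun i => ?_)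
    exact ((continuous_const.sub continuous_id).mul continuous_const).add
      (continuous_id.mul continuous_const)
  have hres := my_path_constancy A φ hφc hφ Z hZfin
    (fun z => (⟨Matrix.diagonal (lamf z), hA _⟩ : A))
    (by
      refine Continuous.continuousOn ?_
      exact Continuous.matrix_diagonal hlamc)
    lamf hlamc hinj
    (fun z _ => by
      rw [show (((⟨Matrix.diagonal (lamf z), hA _⟩ : A) : Matrix (Fin n) (Fin n) ℂ))
        = Matrix.diagonal (lamf z) from rfl, spectrum_diagonal])
    h0mem h1mem k
    (by
      have hc0 : (⟨Matrix.diagonal (lamf 0), hA _⟩ : A) = ⟨Matrix.diagonal μ, hA μ⟩ :=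
        Subtype.ext (by rw [hlamf0])
      show (φ (⟨Matrix.diagonal (lamf 0), hA _⟩ : A)).charpoly
        = ∏ i, (X - C (lamf 0 i)) ^ k i
      rw [hc0, hlamf0]
      exact hk)
  have hc1 : (⟨Matrix.diagonal (lamf 1), hA _⟩ : A) = ⟨Matrix.diagonal lam, hA lam⟩ :=
    Subtype.ext (by rw [hlamf1])
  have hres' : (φ (⟨Matrix.diagonal (lamf 1), hA _⟩ : A)).charpoly
      = ∏ i, (X - C (lamf 1 i)) ^ k i := hres
  rw [hlamf1] at hres'
  exact hres'


lemma my_stage2 {n m : ℕ} (A : Subalgebra ℂ (Matrix (Fin n) (Fin n) ℂ))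
    (hA : ∀ d : Fin n → ℂ, Matrix.diagonal d ∈ A)
    (φ : A → Matrix (Fin m) (Fin m) ℂ) (hφc : Continuous φ)
    (hφ : ∀ a : A, spectrum ℂ (φ a) ⊆ spectrum ℂ (a : Matrix (Fin n) (Fin n) ℂ))
    (lam : Fin n → ℂ) (hlam : Function.Injective lam) (S : Aˣ) (k : Fin n → ℕ)
    (hk : (φ ⟨Matrix.diagonal lam, hA lam⟩).charpoly = ∏ i, (X - C (lam i)) ^ (k i)) :
    (φ ((S : A) * ⟨Matrix.diagonal lam, hA lam⟩ * ((S⁻¹ : Aˣ) : A))).charpoly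
      = ∏ i, (X - C (lam i)) ^ (k i) := by
  classical
  set Ms : Matrix (Fin n) (Fin n) ℂ := ((S : A) : Matrix (Fin n) (Fin n) ℂ) with hMs
  have hSright : Ms * (((S⁻¹ : Aˣ) : A) : Matrix (Fin n) (Fin n) ℂ) = 1 := by
    have h1 : (S : A) * ((S⁻¹ : Aˣ) : A) = 1 := S.mul_inv
    exact congrArg (Subalgebra.val A) h1
  have hMsdet : Ms.det ≠ 0 := by
    have hdet := congrArg Matrix.det hSright
    rw [Matrix.det_mul, Matrix.det_one] at hdet
    intro hc
    rw [hc, zero_mul] at hdet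
    exact zero_ne_one hdet
  set Mz : ℂ → Matrix (Fin n) (Fin n) ℂ := fun z => (1 - z) • 1 + z • Ms with hMzdef
  set N : Matrix (Fin n) (Fin n) (Polynomial ℂ) :=
    ((1 : Polynomial ℂ) - X) • 1 + (X : Polynomial ℂ) • Ms.map C with hNdef
  have hNev : ∀ z : ℂ, Polynomial.eval z N.det = (Mz z).det := by
    intro z
    rw [show Polynomial.eval z N.det = (Polynomial.evalRingHom z) N.det from rfl,
      RingHom.map_det]
    congr 1
    ext i j
    rw [RingHom.mapMatrix_apply]
    by_cases h : i = j <;>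
      · simp [hNdef, hMzdef, Matrix.add_apply, Matrix.smul_apply, Matrix.one_apply,
          Matrix.map_apply, h, smul_eq_mul, Polynomial.coe_evalRingHom]
        try ring
  have hMz0 : Mz 0 = 1 := by simp [hMzdef]
  have hMz1 : Mz 1 = Ms := by simp [hMzdef]
  have hNdet0 : N.det ≠ 0 := by
    intro hc
    have := hNev 0
    rw [hc, hMz0] at this
    simp at this
  set Z : Set ℂ := {z | Polynomial.IsRoot N.det z} with hZdef
  have hZfin : Z.Finite := Polynomial.finite_setOf_isRoot hNdet0
  have hmemdet : ∀ z ∈ (Zᶜ : Set ℂ), (Mz z).det ≠ 0 := by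
    intro z hz hc
    exact hz (show Polynomial.IsRoot N.det z from by rw [Polynomial.IsRoot, hNev z, hc])
  have h0mem : (0 : ℂ) ∈ (Zᶜ : Set ℂ) := by
    intro hc
    have : (Mz 0).det = 0 := by rw [← hNev 0]; exact hc
    rw [hMz0] at this; simp at this
  have h1mem : (1 : ℂ) ∈ (Zᶜ : Set ℂ) := by
    intro hc
    have : (Mz 1).det = 0 := by rw [← hNev 1]; exact hc
    rw [hMz1] at this; exact hMsdet this
  have hMzmem : ∀ z : ℂ, Mz z ∈ A := by
    intro z
    exact A.add_mem (A.smul_mem A.one_mem _) (A.smul_mem (SetLike.coe_mem (S : A)) _)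
  have hcmem : ∀ z : ℂ, Mz z * Matrix.diagonal lam * (Mz z)⁻¹ ∈ A := by
    intro z
    exact A.mul_mem (A.mul_mem (hMzmem z) (hA lam)) (my_inv_mem A (hMzmem z))
  set c : ℂ → A := fun z => ⟨Mz z * Matrix.diagonal lam * (Mz z)⁻¹, hcmem z⟩ with hcdef
  have hMzc : Continuous Mz := by
    refine Continuous.add ?_ ?_
    · exact (continuous_const.sub continuous_id).smul continuous_const
    · exact continuous_id.smul continuous_const
  have hinvc : ContinuousOn (fun z => (Mz z)⁻¹) (Zᶜ : Set ℂ) := by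
    intro z hz
    refine ContinuousAt.continuousWithinAt ?_
    refine ContinuousAt.comp ?_ hMzc.continuousAt
    refine continuousAt_matrix_inv (Mz z) ?_
    rw [Ring.inverse_eq_inv']
    exact continuousAt_inv₀ (hmemdet z hz)
  have hc : ContinuousOn (fun z => ((c z : Matrix (Fin n) (Fin n) ℂ))) (Zᶜ : Set ℂ) := by
    refine ContinuousOn.mul ?_ hinvc
    exact (hMzc.continuousOn.mul continuousOn_const)
  have hspec : ∀ z ∈ (Zᶜ : Set ℂ),
      spectrum ℂ ((c z : Matrix (Fin n) (Fin n) ℂ)) ⊆ Set.range ((fun _ : ℂ => lam) z) := by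
    intro z hz
    have hu : IsUnit (Mz z) :=
      (Matrix.isUnit_iff_isUnit_det (Mz z)).mpr (isUnit_iff_ne_zero.mpr (hmemdet z hz))
    have hrw : (c z : Matrix (Fin n) (Fin n) ℂ)
        = (hu.unit : Matrix (Fin n) (Fin n) ℂ) * Matrix.diagonal lam *
          ((hu.unit⁻¹ : (Matrix (Fin n) (Fin n) ℂ)ˣ) : Matrix (Fin n) (Fin n) ℂ) := by
      rw [Matrix.coe_units_inv, IsUnit.unit_spec]
    rw [hrw, spectrum.units_conjugate, spectrum_diagonal]
  have hres := my_path_constancy A φ hφc hφ Z hZfin c hc (fun _ => lam) continuous_const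
    (fun z _ => hlam) hspec h0mem h1mem k
    (by
      show (φ (c 0)).charpoly = ∏ i, (X - C (lam i)) ^ (k i)
      have hc0 : c 0 = ⟨Matrix.diagonal lam, hA lam⟩ := by
        refine Subtype.ext ?_
        show Mz 0 * Matrix.diagonal lam * (Mz 0)⁻¹ = Matrix.diagonal lam
        rw [hMz0, inv_one, one_mul, mul_one]
      rw [hc0]
      exact hk)
  show (φ ((S : A) * ⟨Matrix.diagonal lam, hA lam⟩ * ((S⁻¹ : Aˣ) : A))).charpoly
      = ∏ i, (X - C (lam i)) ^ (k i)
  have hc1 : c 1 = (S : A) * ⟨Matrix.diagonal lam, hA lam⟩ * ((S⁻¹ : Aˣ) : A) := by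
    refine Subtype.ext ?_
    show Mz 1 * Matrix.diagonal lam * (Mz 1)⁻¹
      = ((((S : A) * ⟨Matrix.diagonal lam, hA lam⟩ * ((S⁻¹ : Aˣ) : A)) : A) :
          Matrix (Fin n) (Fin n) ℂ)
    rw [hMz1, Matrix.inv_eq_right_inv hSright]
    simp [hMs]
  rw [← hc1]
  exact hres


/-- Let `A ⊆ M n (ℂ)` be a structural matrix algebra (a unital subalgebra containing all
diagonal matrices) and `φ : A → M m (ℂ)` a continuous spectrum-shrinking map.  Then there
are non-negative integers `ℓ 1, …, ℓ n` summing to `m` such that for every unit `S` of `A`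
and all `λ 1, …, λ n ∈ ℂ` the characteristic polynomial of
`φ (S · diag(λ 1, …, λ n) · S⁻¹)` equals `∏ i, (X - C (λ i)) ^ ℓ i`; moreover `ℓ r = ℓ s`
whenever the permutation matrix of the transposition `(r s)` lies in `A`. -/
theorem charpoly_of_spectrum_shrinking_on_SMA
    {n m : ℕ} (A : Subalgebra ℂ (Matrix (Fin n) (Fin n) ℂ))
    (hA : ∀ d : Fin n → ℂ, Matrix.diagonal d ∈ A)
    (φ : A → Matrix (Fin m) (Fin m) ℂ) (hφc : Continuous φ)
    (hφ : ∀ a : A, spectrum ℂ (φ a) ⊆ spectrum ℂ (a : Matrix (Fin n) (Fin n) ℂ)) :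
    ∃ ℓ : Fin n → ℕ, (∑ i, ℓ i) = m ∧
      (∀ (S : Aˣ) (lam : Fin n → ℂ),
        (φ ((S : A) * ⟨Matrix.diagonal lam, hA lam⟩ * ((S⁻¹ : Aˣ) : A))).charpoly =
          ∏ i, (Polynomial.X - Polynomial.C (lam i)) ^ ℓ i) ∧
      (∀ r s : Fin n, (Equiv.swap r s).permMatrix ℂ ∈ A → ℓ r = ℓ s) := by
  classical
  set e : Fin n → ℂ := fun i => ((i : ℕ) : ℂ) with hedef
  have he : Function.Injective e := by
    intro i j hij
    exact Fin.val_injective (Nat.cast_injective hij)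
  obtain ⟨ℓ, hsum, href⟩ := my_exists_exponents (φ ⟨Matrix.diagonal e, hA e⟩) e
    (by
      refine (hφ _).trans ?_
      rw [show ((⟨Matrix.diagonal e, hA e⟩ : A) : Matrix (Fin n) (Fin n) ℂ)
        = Matrix.diagonal e from rfl, spectrum_diagonal])
  have main_inj : ∀ (S : Aˣ) (lam : Fin n → ℂ), Function.Injective lam →
      (φ ((S : A) * ⟨Matrix.diagonal lam, hA lam⟩ * ((S⁻¹ : Aˣ) : A))).charpoly
        = ∏ i, (X - C (lam i)) ^ ℓ i := fun S lam hlam =>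
    my_stage2 A hA φ hφc hφ lam hlam S ℓ (my_stage1 A hA φ hφc hφ e lam he hlam ℓ href)
  have main : ∀ (S : Aˣ) (lam : Fin n → ℂ),
      (φ ((S : A) * ⟨Matrix.diagonal lam, hA lam⟩ * ((S⁻¹ : Aˣ) : A))).charpoly
        = ∏ i, (X - C (lam i)) ^ ℓ i := by
    intro S lam
    refine Polynomial.funext (fun x => ?_)
    set lamt : ℂ → Fin n → ℂ := fun t i => lam i + t * e i with hlamt
    set T : Set ℂ := ⋃ p : {p : Fin n × Fin n // p.1 ≠ p.2},
      {t : ℂ | lamt t p.1.1 = lamt t p.1.2} with hT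
    have hTfin : T.Finite := by
      refine Set.finite_iUnion (fun p => ?_)
      have hsub : {t : ℂ | lamt t p.1.1 = lamt t p.1.2} ⊆
          {t | IsRoot (Polynomial.C (lam p.1.1 - lam p.1.2)
            + Polynomial.C (e p.1.1 - e p.1.2) * X) t} := by
        intro t ht
        simp only [Set.mem_setOf_eq, hlamt] at ht
        simp only [Set.mem_setOf_eq, IsRoot, eval_add, eval_mul, eval_C, eval_X]
        linear_combination ht
      refine Set.Finite.subset (Polynomial.finite_setOf_isRoot ?_) hsub
      intro hc
      have h1 := congrArg (fun p => Polynomial.coeff p 1) hc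
      simp only [Polynomial.coeff_add, Polynomial.coeff_C, Polynomial.coeff_C_mul,
        Polynomial.coeff_X_one, Polynomial.coeff_zero, mul_one] at h1
      norm_num at h1
      exact p.2 (he (sub_eq_zero.mp h1))
    have hinj_t : ∀ t ∉ T, Function.Injective (lamt t) := by
      intro t ht i j hij
      by_contra hne
      exact ht (Set.mem_iUnion.2 ⟨⟨(i, j), hne⟩, hij⟩)
    set u : ℕ → ℂ := fun j => ((1 / (j + 1 : ℝ) : ℝ) : ℂ) with hu
    have hu0 : Filter.Tendsto u Filter.atTop (nhds 0) := by
      rw [show ((0:ℂ)) = ((0:ℝ):ℂ) from by norm_num]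
      exact (Complex.continuous_ofReal.tendsto 0).comp tendsto_one_div_add_atTop_nhds_zero_nat
    have huinj : Function.Injective u := by
      intro a b hab
      have h1 := Complex.ofReal_injective hab
      rw [one_div, one_div] at h1
      have h2 := inv_injective h1
      have : (a : ℝ) = b := by linarith
      exact_mod_cast this
    have hev : ∀ᶠ j in Filter.atTop, u j ∉ T := by
      rw [← Nat.cofinite_eq_atTop]
      exact (hTfin.preimage (Set.injOn_of_injective huinj)).compl_mem_cofinite
    have hdiagc : Continuous (fun t => (⟨Matrix.diagonal (lamt t), hA (lamt t)⟩ : A)) := by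
      refine Continuous.subtype_mk ?_ _
      refine Continuous.matrix_diagonal ?_
      exact continuous_pi (fun i => continuous_const.add (continuous_id.mul continuous_const))
    have hφcont : Continuous
        (fun t => φ ((S : A) * ⟨Matrix.diagonal (lamt t), hA (lamt t)⟩ * ((S⁻¹ : Aˣ) : A))) := by
      refine hφc.comp ?_
      refine Continuous.subtype_mk ?_ _
      exact (continuous_const.mul (Continuous.matrix_diagonal
        (continuous_pi (fun i => continuous_const.add (continuous_id.mul continuous_const))))).mul
        continuous_const
    set F : ℂ → ℂ := fun t => Matrix.det (Matrix.scalar (Fin m) x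
      - φ ((S : A) * ⟨Matrix.diagonal (lamt t), hA (lamt t)⟩ * ((S⁻¹ : Aˣ) : A))) with hFdef
    set G : ℂ → ℂ := fun t => ∏ i, (x - lamt t i) ^ ℓ i with hGdef
    have hFc : Continuous F := (continuous_const.sub hφcont).matrix_det
    have hGc : Continuous G := by
      refine continuous_finset_prod _ (fun i _ => ?_)
      exact (continuous_const.sub
        (continuous_const.add (continuous_id.mul continuous_const))).pow _
    have hFG : ∀ t, t ∉ T → F t = G t := by
      intro t ht
      have hres := main_inj S (lamt t) (hinj_t t ht)
      have := congrArg (Polynomial.eval x) hres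
      rw [my_charpoly_eval] at this
      simpa [hFdef, hGdef, Polynomial.eval_prod] using this
    have hFt : Filter.Tendsto (F ∘ u) Filter.atTop (nhds (F 0)) := (hFc.tendsto 0).comp hu0
    have hGt : Filter.Tendsto (G ∘ u) Filter.atTop (nhds (G 0)) := (hGc.tendsto 0).comp hu0
    have hFt' : Filter.Tendsto (F ∘ u) Filter.atTop (nhds (G 0)) :=
      hGt.congr' (hev.mono (fun j hj => (hFG (u j) hj).symm))
    have h00 : F 0 = G 0 := tendsto_nhds_unique hFt hFt'
    have hl0 : lamt 0 = lam := funext (fun i => by simp [hlamt])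
    have hF0 : F 0 = ((φ ((S : A) * ⟨Matrix.diagonal lam, hA lam⟩
        * ((S⁻¹ : Aˣ) : A))).charpoly).eval x := by
      rw [my_charpoly_eval]
      show Matrix.det (Matrix.scalar (Fin m) x
        - φ ((S : A) * ⟨Matrix.diagonal (lamt 0), hA (lamt 0)⟩ * ((S⁻¹ : Aˣ) : A))) = _
      rw [hl0]
    have hG0 : G 0 = (∏ i, (X - C (lam i)) ^ ℓ i).eval x := by
      show (∏ i, (x - lamt 0 i) ^ ℓ i) = _
      rw [hl0]
      simp [Polynomial.eval_prod]
    rw [← hF0, ← hG0]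
    exact h00
  refine ⟨ℓ, hsum, main, ?_⟩
  intro r s hP
  set σ := Equiv.swap r s with hσ
  have hPP : (σ.permMatrix ℂ) * (σ.permMatrix ℂ) = 1 := by
    rw [show σ.permMatrix ℂ = σ.toPEquiv.toMatrix from rfl, ← PEquiv.toMatrix_trans,
      ← Equiv.toPEquiv_trans]
    rw [show σ.trans σ = Equiv.refl (Fin n) from Equiv.swap_swap r s]
    rw [Equiv.toPEquiv_refl, PEquiv.toMatrix_refl]
  set Pel : A := ⟨σ.permMatrix ℂ, hP⟩ with hPel
  set Pu : Aˣ := ⟨Pel, Pel, Subtype.ext hPP, Subtype.ext hPP⟩ with hPu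
  have hconj : (σ.permMatrix ℂ) * Matrix.diagonal e * (σ.permMatrix ℂ)
      = Matrix.diagonal (fun i => e (σ i)) := by
    rw [show σ.permMatrix ℂ = σ.toPEquiv.toMatrix from rfl]
    rw [PEquiv.mul_toMatrix_toPEquiv, PEquiv.toMatrix_toPEquiv_mul]
    have hss : σ.symm = σ := Equiv.symm_swap r s
    ext i j
    by_cases h : i = j
    · subst h
      simp [Matrix.submatrix_apply, Matrix.diagonal_apply, hss]
    · have hne : σ i ≠ σ.symm j := by
        rw [hss]
        exact fun hc => h (σ.injective hc)
      simp [Matrix.submatrix_apply, Matrix.diagonal_apply, h, hne]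
  have h1 := main Pu e
  have h2 := main 1 (fun i => e (σ i))
  have helem : (Pu : A) * ⟨Matrix.diagonal e, hA e⟩ * ((Pu⁻¹ : Aˣ) : A)
      = ((1 : Aˣ) : A) * ⟨Matrix.diagonal (fun i => e (σ i)), hA _⟩ * ((1⁻¹ : Aˣ) : A) := by
    refine Subtype.ext ?_
    show (σ.permMatrix ℂ) * Matrix.diagonal e * (σ.permMatrix ℂ)
      = ((((1 : Aˣ) : A) * ⟨Matrix.diagonal (fun i => e (σ i)), hA _⟩ * ((1⁻¹ : Aˣ) : A) : A)
        : Matrix (Fin n) (Fin n) ℂ)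
    rw [hconj]
    norm_num
  rw [helem, h2] at h1
  have h4 : ∏ i, (X - C (e (σ i))) ^ ℓ i = ∏ i, (X - C (e i)) ^ (ℓ (σ i)) := by
    rw [← Equiv.prod_comp σ (fun j => (X - C (e j)) ^ (ℓ (σ j)))]
    refine Finset.prod_congr rfl (fun i _ => ?_)
    rw [show σ (σ i) = i from Equiv.swap_apply_self r s i]
  have h5 : ℓ = fun i => ℓ (σ i) := my_exp_unique he (h1.symm.trans h4)
  have h6 := congrFun h5 r
  simp only [hσ, Equiv.swap_apply_left] at h6
  exact h6
end

section
/- Let 𝒜 and ℬ be finite-dimensional unital associative ℂ-algebras, each equipped with its unique Hausdorff vector space topology, and let I be a nilpotent two-sided ideal of ℬ (I^k = 0 for some positive integer k). Then there exists a continuous spectrum-shrinking map 𝒜 → ℬ if and only if there exists a continuous spectrum-shrinking map 𝒜 → ℬ/I, where ℬ/I carries its unique Hausdorff vector space topology. -/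
/-- The quotient topology on the quotient of a topological ring by a ring congruence;
for a finite-dimensional algebra over ℂ with its unique Hausdorff vector topology and a
(closed) ideal, this is the unique Hausdorff vector topology of the quotient algebra. -/
instance RingCon.instTopologicalSpaceQuotient {R : Type*} [Add R] [Mul R] [TopologicalSpace R]
    (c : RingCon R) : TopologicalSpace c.Quotient :=
  inferInstanceAs (TopologicalSpace (Quotient c.toSetoid))

private lemma isUnit_of_left_right {M : Type*} [Monoid M] {x l r : M}
    (hl : l * x = 1) (hr : x * r = 1) : IsUnit x := by
  have : r = l := by
    calc r = 1 * r := (one_mul r).symm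
    _ = l * x * r := by rw [hl]
    _ = l * (x * r) := mul_assoc _ _ _
    _ = l := by rw [hr, mul_one]
  exact ⟨⟨x, r, hr, this ▸ hl⟩, rfl⟩

/-- If `I` is a nilpotent two-sided ideal of `B`, then there exists a continuous
spectrum-shrinking map `A → B` iff there exists a continuous spectrum-shrinking map
`A → B/I`. -/
theorem exists_spectrum_shrinking_iff_quotient_nilpotent
    {A B : Type*} [Ring A] [Algebra ℂ A] [FiniteDimensional ℂ A]
    [TopologicalSpace A] [IsTopologicalRing A] [ContinuousSMul ℂ A] [T2Space A]
    [Ring B] [Algebra ℂ B] [FiniteDimensional ℂ B]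
    [TopologicalSpace B] [IsTopologicalRing B] [ContinuousSMul ℂ B] [T2Space B]
    (I : TwoSidedIdeal B) (k : ℕ) (hk : 0 < k)
    (hnil : ∀ f : Fin k → B, (∀ i, f i ∈ I) → (List.ofFn f).prod = 0) :
    (∃ φ : A → B, Continuous φ ∧ ∀ a : A, spectrum ℂ (φ a) ⊆ spectrum ℂ a) ↔
      ∃ ψ : A → I.ringCon.Quotient, Continuous ψ ∧
        ∀ a : A, spectrum ℂ (ψ a) ⊆ spectrum ℂ a := by
  set Q := I.ringCon.Quotient
  -- the quotient map as an algebra hom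
  let π : B →ₐ[ℂ] Q := { I.ringCon.mk' with commutes' := fun _ => rfl }
  have hπcont : Continuous (π : B → Q) := continuous_quotient_mk'
  -- elements of I are nilpotent
  have hIn : ∀ n ∈ I, IsNilpotent n := by
    intro n hn
    refine ⟨k, ?_⟩
    have := hnil (fun _ => n) (fun _ => hn)
    simpa [List.ofFn_const, List.prod_replicate] using this
  -- kernel of π is I
  have hker : ∀ b : B, π b = 0 → b ∈ I := by
    intro b hb
    exact (TwoSidedIdeal.mem_iff I b).mpr ((I.ringCon.eq).mp hb)
  -- units lift along π
  have hlift : ∀ x : B, IsUnit (π x) → IsUnit x := by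
    intro x hx
    obtain ⟨u, hu⟩ := hx
    obtain ⟨y, hy⟩ := Quotient.exists_rep (↑u⁻¹ : Q)
    have hy' : π y = ↑u⁻¹ := hy
    have h1 : π (x * y - 1) = 0 := by
      simp [map_mul, hy', ← hu, map_sub, map_one]
    have h2 : π (y * x - 1) = 0 := by
      simp [map_mul, hy', ← hu, map_sub, map_one]
    have hu1 : IsUnit (x * y) := by
      have : x * y = 1 + (x * y - 1) := by abel
      rw [this]
      exact ((hIn _ (hker _ h1))).isUnit_one_add
    have hu2 : IsUnit (y * x) := by
      have : y * x = 1 + (y * x - 1) := by abel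
      rw [this]
      exact ((hIn _ (hker _ h2))).isUnit_one_add
    obtain ⟨u1, hu1'⟩ := hu1
    obtain ⟨u2, hu2'⟩ := hu2
    refine isUnit_of_left_right (l := ↑u2⁻¹ * y) (r := y * ↑u1⁻¹) ?_ ?_
    · rw [mul_assoc, ← hu2', u2.inv_mul]
    · rw [← mul_assoc, ← hu1', u1.mul_inv]
  constructor
  · rintro ⟨φ, hφc, hφs⟩
    exact ⟨fun a => π (φ a), hπcont.comp hφc,
      fun a => (AlgHom.spectrum_apply_subset π (φ a)).trans (hφs a)⟩
  · rintro ⟨ψ, hψc, hψs⟩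
    -- linear section of π
    have hsurj : Function.Surjective π.toLinearMap := Quotient.exists_rep
    obtain ⟨σ, hσ⟩ := π.toLinearMap.exists_rightInverse_of_surjective
      (LinearMap.range_eq_top.mpr hsurj)
    have hσπ : ∀ q : Q, π (σ q) = q := fun q => congrArg (· q) (congrArg DFunLike.coe hσ)
    -- σ is continuous
    have hσcont : Continuous (σ : Q → B) := by
      letI s : Setoid B := I.ringCon.toSetoid
      refine (isQuotientMap_quotient_mk' (s := s)).continuous_iff.mpr ?_
      have : ((σ : Q → B) ∘ (Quotient.mk' : B → Quotient s)) = ⇑(σ ∘ₗ π.toLinearMap) := rfl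
      change Continuous ((σ : Q → B) ∘ (Quotient.mk' : B → Quotient s))
      rw [this]
      exact (σ ∘ₗ π.toLinearMap).continuous_of_finiteDimensional
    refine ⟨fun a => σ (ψ a), hσcont.comp hψc, fun a => ?_⟩
    refine Set.Subset.trans ?_ (hψs a)
    intro lam hlam
    by_contra h
    rw [spectrum.notMem_iff] at h
    refine spectrum.notMem_iff.mpr (hlift _ ?_) hlam
    have heq : π (algebraMap ℂ B lam - σ (ψ a)) = algebraMap ℂ Q lam - ψ a := by
      rw [map_sub, hσπ, π.commutes]
    rw [heq]
    exact h
end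

section
/- Let 𝒜 and ℬ be finite-dimensional unital associative ℂ-algebras, each equipped with its unique Hausdorff vector space topology, and let I be a nilpotent two-sided ideal of ℬ (I^k = 0 for some positive integer k). Then there exists a continuous spectrum-preserving map 𝒜 → ℬ if and only if there exists a continuous spectrum-preserving map 𝒜 → ℬ/I, where ℬ/I carries its unique Hausdorff vector space topology. -/
section Aux

variable {B : Type*} [Ring B] [Algebra ℂ B]

/-- If `I` is nilpotent, an element of `B` is a unit iff its image in `B/I` is a unit. -/
theorem aux_isUnit_iff (I : TwoSidedIdeal B) (k : ℕ) (hk : 0 < k)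
    (hnil : ∀ f : Fin k → B, (∀ i, f i ∈ I) → (List.ofFn f).prod = 0) (b : B) :
    IsUnit (b : I.ringCon.Quotient) ↔ IsUnit b := by
  have pow_zero : ∀ m : B, m ∈ I → m ^ k = 0 := by
    intro m hm
    have := hnil (fun _ => m) (fun _ => hm)
    rwa [List.ofFn_const, List.prod_replicate] at this
  constructor
  · rintro ⟨u, hu⟩
    obtain ⟨c, hc⟩ := Quotient.exists_rep (↑u⁻¹ : I.ringCon.Quotient)
    have hc' : (c : I.ringCon.Quotient) = ↑u⁻¹ := hc
    have h1 : ((b * c : B) : I.ringCon.Quotient) = ((1 : B) : I.ringCon.Quotient) := by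
      rw [RingCon.coe_mul, RingCon.coe_one, hc', ← hu, Units.mul_inv]
    have h2 : ((c * b : B) : I.ringCon.Quotient) = ((1 : B) : I.ringCon.Quotient) := by
      rw [RingCon.coe_mul, RingCon.coe_one, hc', ← hu, Units.inv_mul]
    have hm1 : (1 : B) - b * c ∈ I := by
      have := (TwoSidedIdeal.rel_iff I (b * c) 1).mp ((RingCon.eq _).mp h1)
      simpa using I.neg_mem this
    have hm2 : (1 : B) - c * b ∈ I := by
      have := (TwoSidedIdeal.rel_iff I (c * b) 1).mp ((RingCon.eq _).mp h2)
      simpa using I.neg_mem this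
    have hu1 : IsUnit (b * c) := by
      have := IsNilpotent.isUnit_one_sub ⟨k, pow_zero _ hm1⟩
      simpa using this
    have hu2 : IsUnit (c * b) := by
      have := IsNilpotent.isUnit_one_sub ⟨k, pow_zero _ hm2⟩
      simpa using this
    obtain ⟨u1, e1⟩ := hu1
    obtain ⟨u2, e2⟩ := hu2
    set d : B := c * ↑u1⁻¹ with hd
    set e : B := ↑u2⁻¹ * c with he
    have hbd : b * d = 1 := by
      rw [hd, ← mul_assoc, ← e1, Units.mul_inv]
    have heb : e * b = 1 := by
      rw [he, mul_assoc, ← e2, Units.inv_mul]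
    have hde : d = e := by
      calc d = (e * b) * d := by rw [heb, one_mul]
        _ = e * (b * d) := by rw [mul_assoc]
        _ = e := by rw [hbd, mul_one]
    exact ⟨⟨b, d, hbd, by rw [hde, heb]⟩, rfl⟩
  · intro h
    exact h.map (I.ringCon.mk')

theorem aux_spectrum_eq (I : TwoSidedIdeal B) (k : ℕ) (hk : 0 < k)
    (hnil : ∀ f : Fin k → B, (∀ i, f i ∈ I) → (List.ofFn f).prod = 0) (b : B) :
    spectrum ℂ (b : I.ringCon.Quotient) = spectrum ℂ b := by
  ext lam
  simp only [spectrum.mem_iff, not_iff_not]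
  have : (algebraMap ℂ I.ringCon.Quotient lam) - (b : I.ringCon.Quotient)
      = ((algebraMap ℂ B lam - b : B) : I.ringCon.Quotient) := by
    rw [RingCon.coe_sub, RingCon.coe_algebraMap]
  rw [this, aux_isUnit_iff I k hk hnil]

end Aux

/-- If `I` is a nilpotent two-sided ideal of `B`, then there exists a continuous
spectrum-preserving map `A → B` iff there exists a continuous spectrum-preserving map
`A → B/I`. -/
theorem exists_spectrum_preserving_iff_quotient_nilpotent
    {A B : Type*} [Ring A] [Algebra ℂ A] [FiniteDimensional ℂ A]
    [TopologicalSpace A] [IsTopologicalRing A] [ContinuousSMul ℂ A] [T2Space A]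
    [Ring B] [Algebra ℂ B] [FiniteDimensional ℂ B]
    [TopologicalSpace B] [IsTopologicalRing B] [ContinuousSMul ℂ B] [T2Space B]
    (I : TwoSidedIdeal B) (k : ℕ) (hk : 0 < k)
    (hnil : ∀ f : Fin k → B, (∀ i, f i ∈ I) → (List.ofFn f).prod = 0) :
    (∃ φ : A → B, Continuous φ ∧ ∀ a : A, spectrum ℂ (φ a) = spectrum ℂ a) ↔
      ∃ ψ : A → I.ringCon.Quotient, Continuous ψ ∧
        ∀ a : A, spectrum ℂ (ψ a) = spectrum ℂ a := by
  constructor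
  · rintro ⟨φ, hcont, hsp⟩
    refine ⟨fun a => (φ a : I.ringCon.Quotient), ?_, ?_⟩
    · exact continuous_quotient_mk'.comp hcont
    · intro a
      rw [aux_spectrum_eq I k hk hnil, hsp]
  · rintro ⟨ψ, hcont, hsp⟩
    -- build the quotient map as a linear map
    let π : B →ₗ[ℂ] I.ringCon.Quotient :=
      { toFun := fun b => (b : I.ringCon.Quotient)
        map_add' := fun x y => RingCon.coe_add _ x y
        map_smul' := fun r x => RingCon.coe_smul _ r x }
    have hπsurj : LinearMap.range π = ⊤ := by
      rw [LinearMap.range_eq_top]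
      intro q
      obtain ⟨b, hb⟩ := Quotient.exists_rep q
      exact ⟨b, hb⟩
    obtain ⟨g, hg⟩ := π.exists_rightInverse_of_surjective hπsurj
    have hgπ : ∀ q, ((g q : B) : I.ringCon.Quotient) = q := by
      intro q
      exact congrArg (fun f => f q) (congrArg DFunLike.coe hg)
    have hgcont : Continuous g := by
      refine (isQuotientMap_quotient_mk' (s := I.ringCon.toSetoid)).continuous_iff.mpr ?_
      exact (g.comp π).continuous_of_finiteDimensional
    refine ⟨fun a => g (ψ a), hgcont.comp hcont, ?_⟩
    intro a
    rw [← hsp a, ← aux_spectrum_eq I k hk hnil (g (ψ a)), hgπ]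
end

section
/- Let 𝒜 be a finite-dimensional unital associative ℂ-algebra equipped with its unique Hausdorff vector space topology, with maximal two-sided ideals Max(𝒜) = {M_1,…,M_p}, and set k_i = √(dim_ℂ(𝒜/M_i)). If gcd(k_1,…,k_p) = 1, then there exists a positive integer N such that for every integer m ≥ N there exists a continuous spectrum-shrinking map φ : 𝒜 → M_m(ℂ). -/
/-- Bezout for `Finset.gcd` over ℕ. -/
lemma finset_gcd_bezout' {β : Type*} [DecidableEq β] (s : Finset β) (d : β → ℕ) :
    ∃ z : β → ℤ, ∑ i ∈ s, z i * d i = ((s.gcd d : ℕ) : ℤ) := by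
  classical
  induction s using Finset.induction_on with
  | empty => exact ⟨0, by simp⟩
  | @insert i s hi ih =>
    obtain ⟨z, hz⟩ := ih
    refine ⟨fun j => if j = i then Nat.gcdA (d i) (s.gcd d)
      else Nat.gcdB (d i) (s.gcd d) * z j, ?_⟩
    rw [Finset.gcd_insert, Finset.sum_insert hi]
    have : ∀ j ∈ s, (if j = i then Nat.gcdA (d i) (s.gcd d)
        else Nat.gcdB (d i) (s.gcd d) * z j) * d j = Nat.gcdB (d i) (s.gcd d) * (z j * d j) := by
      intro j hj
      rw [if_neg (by rintro rfl; exact hi hj), mul_assoc]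
    rw [Finset.sum_congr rfl this, ← Finset.mul_sum, hz]
    dsimp only
    rw [if_pos rfl]
    have hb := Nat.gcd_eq_gcd_ab (d i) (s.gcd d)
    have hgg : gcd (d i) (s.gcd d) = Nat.gcd (d i) (s.gcd d) := rfl
    rw [hgg, hb]; ring

/-- Frobenius-type lemma: a family with gcd 1 represents all large naturals. -/
lemma exists_frobenius_bound' {p : ℕ} (d : Fin p → ℕ)
    (hgcd : Finset.univ.gcd d = 1) :
    ∃ N : ℕ, 0 < N ∧ ∀ m, N ≤ m → ∃ c : Fin p → ℕ, ∑ i, c i * d i = m := by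
  obtain ⟨z, hz⟩ := finset_gcd_bezout' Finset.univ d
  rw [hgcd, Nat.cast_one] at hz
  set x : Fin p → ℕ := fun i => (z i).toNat with hx
  set y : Fin p → ℕ := fun i => (-z i).toNat with hy
  set X := ∑ i, x i * d i with hX
  set Y := ∑ i, y i * d i with hY
  have hXY : X = Y + 1 := by
    have : (X : ℤ) - (Y : ℤ) = 1 := by
      rw [hX, hY]
      push_cast
      rw [← Finset.sum_sub_distrib, ← hz]
      refine Finset.sum_congr rfl fun i _ => ?_
      have : ((x i : ℤ) - y i) = z i := by
        simp only [hx, hy]; omega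
      rw [← this]; ring
    omega
  have key : ∀ α β : ℕ, ∑ i, (α * y i + β * x i) * d i = α * Y + β * X := by
    intro α β
    rw [hX, hY, Finset.mul_sum, Finset.mul_sum, ← Finset.sum_add_distrib]
    refine Finset.sum_congr rfl fun i _ => by ring
  rcases Nat.eq_zero_or_pos Y with hY0 | hY0
  · refine ⟨1, one_pos, fun m _ => ⟨fun i => m * x i, ?_⟩⟩
    have := key 0 m
    simpa [hY0, hXY] using this
  · refine ⟨Y * Y, by positivity, fun m hm => ?_⟩
    set q := m / Y with hq
    set r := m % Y with hr
    have hdm : Y * q + r = m := Nat.div_add_mod m Y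
    have hrY : r < Y := Nat.mod_lt _ hY0
    have hqY : Y ≤ q := Nat.le_div_iff_mul_le hY0 |>.mpr (by nlinarith)
    refine ⟨fun i => (q - r) * y i + r * x i, ?_⟩
    rw [key, hXY]
    have h1 : r ≤ q := le_of_lt (lt_of_lt_of_le hrY hqY)
    zify [h1]
    push_cast [← hdm]
    ring

/-- quotient map as AlgHom -/
def quotAlgHom' {A : Type*} [Ring A] [Algebra ℂ A] (I : TwoSidedIdeal A) :
    A →ₐ[ℂ] I.ringCon.Quotient :=
  { I.ringCon.mk' with commutes' := fun _ => rfl }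

lemma quotAlgHom'_surjective {A : Type*} [Ring A] [Algebra ℂ A] (I : TwoSidedIdeal A) :
    Function.Surjective (quotAlgHom' I) :=
  Quotient.mk''_surjective

lemma fd_quot {A : Type*} [Ring A] [Algebra ℂ A] [FiniteDimensional ℂ A]
    (I : TwoSidedIdeal A) : FiniteDimensional ℂ I.ringCon.Quotient :=
  Module.Finite.of_surjective (quotAlgHom' I).toLinearMap (quotAlgHom'_surjective I)

lemma nontrivial_quot' {A : Type*} [Ring A] (I : TwoSidedIdeal A) (h : IsCoatom I) :
    Nontrivial I.ringCon.Quotient := by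
  rcases subsingleton_or_nontrivial I.ringCon.Quotient with hs | hn
  · exfalso
    apply h.1
    rw [eq_top_iff]
    intro x _
    rw [TwoSidedIdeal.mem_iff]
    have : (x : I.ringCon.Quotient) = ((0 : A) : I.ringCon.Quotient) := Subsingleton.elim _ _
    exact I.ringCon.eq.mp this
  · exact hn

/-- block diagonal as an AlgHom -/
def blockDiagAlgHom' (o : Type*) (m' : o → Type*) [DecidableEq o] [∀ i, DecidableEq (m' i)]
    [Fintype o] [∀ i, Fintype (m' i)] :
    ((i : o) → Matrix (m' i) (m' i) ℂ) →ₐ[ℂ] Matrix ((i : o) × m' i) ((i : o) × m' i) ℂ :=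
  { Matrix.blockDiagonal'RingHom m' ℂ with
    commutes' := fun r => by
      show Matrix.blockDiagonal' _ = _
      have : (algebraMap ℂ ((i : o) → Matrix (m' i) (m' i) ℂ)) r
          = r • (1 : (i : o) → Matrix (m' i) (m' i) ℂ) := Algebra.algebraMap_eq_smul_one r
      rw [this, Matrix.blockDiagonal'_smul, Matrix.blockDiagonal'_one,
        ← Algebra.algebraMap_eq_smul_one] }



/-- If the numbers `k i = √dim(A/M i)` attached to the maximal two-sided ideals of a
finite-dimensional unital ℂ-algebra `A` are coprime, then there exists `N` such that for
every `m ≥ N` there is a continuous spectrum-shrinking map `A → M m (ℂ)`.  (For `m` beyond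
the Frobenius number of `k 1, …, k p`, the relevant Diophantine equation is solvable.) -/
theorem exists_spectrum_shrinking_to_matrix_of_gcd_eq_one
    {A : Type*} [Ring A] [Algebra ℂ A] [FiniteDimensional ℂ A]
    [TopologicalSpace A] [IsTopologicalRing A] [ContinuousSMul ℂ A] [T2Space A]
    {p : ℕ} (M : Fin p → TwoSidedIdeal A)
    (hMinj : Function.Injective M)
    (hMmax : ∀ I : TwoSidedIdeal A, IsCoatom I ↔ ∃ i, I = M i)
    (k : Fin p → ℕ)
    (hk : ∀ i, k i * k i = Module.finrank ℂ (M i).ringCon.Quotient)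
    (hgcd : Finset.univ.gcd k = 1) :
    ∃ N : ℕ, 0 < N ∧ ∀ m : ℕ, N ≤ m →
      ∃ φ : A → Matrix (Fin m) (Fin m) ℂ, Continuous φ ∧
        ∀ a : A, spectrum ℂ (φ a) ⊆ spectrum ℂ a := by
  classical
  haveI hfd : ∀ i, FiniteDimensional ℂ (M i).ringCon.Quotient := fun i => fd_quot (M i)
  haveI hnt : ∀ i, Nontrivial (M i).ringCon.Quotient := fun i =>
    nontrivial_quot' (M i) ((hMmax (M i)).mpr ⟨i, rfl⟩)
  set d : Fin p → ℕ := fun i => k i * k i with hd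
  have hdpos : ∀ i, 0 < d i := fun i => by
    show 0 < k i * k i
    rw [hk i]; exact Module.finrank_pos
  -- gcd of the d i is 1
  have hgcdd : Finset.univ.gcd d = 1 := by
    by_contra hne
    obtain ⟨q, hq, hqdvd⟩ := Nat.exists_prime_and_dvd hne
    have hqk : ∀ i, q ∣ k i := fun i => by
      have h1 : q ∣ d i := dvd_trans hqdvd (Finset.gcd_dvd (Finset.mem_univ i))
      rcases (Nat.Prime.dvd_mul hq).mp h1 with h | h <;> exact h
    have : q ∣ Finset.univ.gcd k := Finset.dvd_gcd fun i _ => hqk i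
    rw [hgcd] at this
    exact Nat.Prime.one_lt hq |>.ne' (Nat.dvd_one.mp this)
  obtain ⟨N, hN, hrep⟩ := exists_frobenius_bound' d hgcdd
  refine ⟨N, hN, fun m hm => ?_⟩
  obtain ⟨c, hc⟩ := hrep m hm
  -- the representation of dimension d i, via the regular representation of the quotient
  let ψ : ∀ i, A →ₐ[ℂ] Matrix (Fin (d i)) (Fin (d i)) ℂ := fun i =>
    ((Matrix.reindexAlgEquiv ℂ ℂ (finCongr (hk i).symm)).toAlgHom).comp
      ((algEquivMatrix (Module.finBasis ℂ (M i).ringCon.Quotient)).toAlgHom.comp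
        ((Algebra.lmul ℂ (M i).ringCon.Quotient).comp (quotAlgHom' (M i))))
  let o := Σ i : Fin p, Fin (c i)
  have hcard : Fintype.card ((j : o) × Fin (d j.1)) = m := by
    rw [Fintype.card_sigma]
    simp only [Fintype.card_fin]
    rw [← hc, ← Finset.univ_sigma_univ, Finset.sum_sigma]
    exact Finset.sum_congr rfl fun i _ => by
      simp [Finset.sum_const, Finset.card_univ, mul_comm]
  let e : ((j : o) × Fin (d j.1)) ≃ Fin m := Fintype.equivFinOfCardEq hcard
  let Φ : A →ₐ[ℂ] Matrix (Fin m) (Fin m) ℂ :=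
    (Matrix.reindexAlgEquiv ℂ ℂ e).toAlgHom.comp
      ((blockDiagAlgHom' o (fun j => Fin (d j.1))).comp
        (Pi.algHom ℂ _ (fun j => ψ j.1)))
  exact ⟨Φ, Φ.toLinearMap.continuous_of_finiteDimensional,
    fun a => AlgHom.spectrum_apply_subset Φ a⟩
end
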